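/- arXiv:2406.06770 — 10 statements merged into one kernel-verified Lean document; each statement's English description precedes it below -/
import Mathlib

section
/- Let γ ≥ 0 and σ ≥ 0 be constants, and let (x, y) be a solution on an interval I of the SIR system x'(t) = -γ σ x(t) y(t), y'(t) = γ σ x(t) y(t) - γ y(t). Then the quantity ρ(t) = x(t) · exp(-σ (x(t) + y(t))) is constant on I. -/
open Set

theorem Convex.eq_of_forall_hasDerivWithinAt_zero {E : Type*} [NormedAddCommGroup E]
    [NormedSpace ℝ E] {s : Set ℝ} {f : ℝ → E} (hs : Convex ℝ s)
    (hf : ∀ t ∈ s, HasDerivWithinAt f 0 s t) {a b : ℝ} (ha : a ∈ s) (hb : b ∈ s) :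
    f a = f b := by
  have h := hs.norm_image_sub_le_of_norm_hasDerivWithin_le hf (C := 0) (by simp) hb ha
  rwa [zero_mul, norm_le_zero_iff, sub_eq_zero] at h

noncomputable def sirInvariant (σ : ℝ) (x y : ℝ → ℝ) (t : ℝ) : ℝ :=
  x t * Real.exp (-σ * (x t + y t))

/-- Along the SIR flow `(x + y)' = -γ y`, so the exponential factor contributes `σ γ x y`,
which cancels `x' = -γ σ x y`. -/
theorem hasDerivWithinAt_sirInvariant {γ σ : ℝ} {x y : ℝ → ℝ} {s : Set ℝ} {t : ℝ}
    (hx : HasDerivWithinAt x (-γ * σ * x t * y t) s t)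
    (hy : HasDerivWithinAt y (γ * σ * x t * y t - γ * y t) s t) :
    HasDerivWithinAt (sirInvariant σ x y) 0 s t := by
  have hexp := ((hx.add hy).const_mul (-σ)).exp
  exact (hx.fun_mul hexp).congr_deriv (by ring)

theorem sir_rho_constant_general
    (γ σ : ℝ)
    (I : Set ℝ) (hI : Convex ℝ I)
    (x y : ℝ → ℝ)
    (hx : ∀ t ∈ I, HasDerivWithinAt x (-γ * σ * x t * y t) I t)
    (hy : ∀ t ∈ I, HasDerivWithinAt y (γ * σ * x t * y t - γ * y t) I t) :
    ∀ s ∈ I, ∀ t ∈ I,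
      x s * Real.exp (-σ * (x s + y s)) = x t * Real.exp (-σ * (x t + y t)) :=
  fun _ hs _ ht => hI.eq_of_forall_hasDerivWithinAt_zero
    (fun u hu => hasDerivWithinAt_sirInvariant (hx u hu) (hy u hu)) hs ht

/-- For the SIR system with constant reproduction number `σ ≥ 0` and recovery rate
`γ ≥ 0`, the quantity `ρ(t) = x(t) · exp (-σ (x(t) + y(t)))` is constant on the
interval `I`. -/
theorem sir_rho_constant
    (γ σ : ℝ) (hγ : 0 ≤ γ) (hσ : 0 ≤ σ)
    (I : Set ℝ) (hI : Convex ℝ I)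
    (x y : ℝ → ℝ)
    (hx : ∀ t ∈ I, HasDerivWithinAt x (-γ * σ * x t * y t) I t)
    (hy : ∀ t ∈ I, HasDerivWithinAt y (γ * σ * x t * y t - γ * y t) I t) :
    ∀ s ∈ I, ∀ t ∈ I,
      x s * Real.exp (-σ * (x s + y s)) = x t * Real.exp (-σ * (x t + y t)) :=
  sir_rho_constant_general γ σ I hI x y hx hy
end

section
/- Let γ > 0 and σ > 0 be constants and let (x₀, y₀) ∈ D. Then the solution (x, y) of the SIR system x' = -γ σ x y, y' = γ σ x y - γ y with (x(0), y(0)) = (x₀, y₀) exists for all t ≥ 0, x is strictly decreasing, y(t) → 0 as t → ∞, and x(t) converges as t → ∞ to a limit x_∞ satisfying 0 < x_∞ < 1/σ, x_∞ < x₀, and x_∞ · exp(-σ x_∞) = x₀ · exp(-σ (x₀ + y₀)). -/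
/-!
Along solutions `x + y - σ⁻¹ log x` is conserved, so `y = g(x)` with
`g u = sirOrbit σ x₀ y₀ u = x₀ + y₀ - u + σ⁻¹ (log u - log x₀)`, and the system reduces to
the scalar equation `x' = -F(x)`, `F u = γ σ u g(u)`. The strictly concave `g` tends to `-∞` at `0` and has
`g x₀ = y₀ > 0`, so it has a root `x∞ ∈ (0, x₀)` and is positive just to its right. Since
`g(u) ≤ (u - x∞) / (σ x∞)`, the travel time `T v = ∫_v^{x₀} du / F(u)` diverges
logarithmically as `v → x∞`; the inverse of `T` is then a solution defined for all `t ≥ 0`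
that decreases to `x∞`, while `y = g(x) → g(x∞) = 0`. Exponentiating `g(x∞) = 0` gives the
final-size relation, and `0 < g x₀ - g x∞ ≤ (x₀ - x∞)((σ x∞)⁻¹ - 1)` gives `σ x∞ < 1`.
-/

open Set Filter Topology

section InverseFunction

variable {T T' : ℝ → ℝ} {a b c : ℝ}

theorem surjOn_Ioi_of_tendsto_nhdsGT_atTop (hc : a < c) (hT : ContinuousOn T (Ioc a c))
    (hTa : Tendsto T (𝓝[>] a) atTop) : SurjOn T (Ioo a c) (Ioi (T c)) := by
  intro t ht
  obtain ⟨w, ⟨hwa, hwc⟩, htw⟩ :=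
    (Eventually.and (Ioo_mem_nhdsGT hc) (hTa.eventually_gt_atTop t)).exists
  obtain ⟨v, ⟨hwv, hvc⟩, hvt⟩ := intermediate_value_Ico' hwc.le
    (hT.mono (Icc_subset_Ioc_iff hwc.le |>.2 ⟨hwa, le_rfl⟩)) ⟨ht, htw.le⟩
  exact ⟨v, ⟨hwa.trans_le hwv, hvc⟩, hvt⟩

theorem exists_inverse_of_hasDerivAt_neg (hc : c ∈ Ioo a b)
    (hT : ∀ v ∈ Ioo a b, HasDerivAt T (T' v) v) (hT' : ∀ v ∈ Ioo a b, T' v < 0)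
    (hTa : Tendsto T (𝓝[>] a) atTop) :
    ∃ x : ℝ → ℝ, StrictAntiOn x (Ioi (T c)) ∧ Tendsto x atTop (𝓝 a) ∧
      (∀ v ∈ Ioo a c, T c < T v ∧ x (T v) = v) ∧
      ∀ t ∈ Ioi (T c), x t ∈ Ioo a c ∧ HasDerivAt x (T' (x t))⁻¹ t := by
  have hsub : Ioo a c ⊆ Ioo a b := Ioo_subset_Ioo_right hc.2.le
  have hcont : ContinuousOn T (Ioo a b) := fun v hv => (hT v hv).continuousAt.continuousWithinAt
  have hanti : StrictAntiOn T (Ioo a b) :=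
    strictAntiOn_of_hasDerivWithinAt_neg (convex_Ioo a b) hcont
      (fun v hv => (hT v (interior_subset hv)).hasDerivWithinAt)
      (fun v hv => hT' v (interior_subset hv))
  have hbij : BijOn T (Ioo a c) (Ioi (T c)) :=
    ⟨fun v hv => hanti (hsub hv) hc hv.2, hanti.injOn.mono hsub,
      surjOn_Ioi_of_tendsto_nhdsGT_atTop hc.1
        (hcont.mono (Ioc_subset_Ioo_right hc.2)) hTa⟩
  set x := Function.invFunOn T (Ioo a c)
  have hinv : InvOn x T (Ioo a c) (Ioi (T c)) := hbij.invOn_invFunOn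
  have hxbij : BijOn x (Ioi (T c)) (Ioo a c) := BijOn.symm hinv.symm hbij
  have hxanti : StrictAntiOn x (Ioi (T c)) := fun s hs t ht hst => by
    rw [← hanti.lt_iff_gt (hsub (hxbij.mapsTo hs)) (hsub (hxbij.mapsTo ht)), hinv.2 hs, hinv.2 ht]
    exact hst
  refine ⟨x, hxanti, ?_, fun v hv => ⟨hbij.mapsTo hv, hinv.1 hv⟩,
    fun t ht => ⟨hxbij.mapsTo ht, ?_⟩⟩
  · refine tendsto_order.2 ⟨fun a' ha' => ?_, fun a' ha' => ?_⟩
    · filter_upwards [Ioi_mem_atTop (T c)] with t ht using ha'.trans (hxbij.mapsTo ht).1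
    · obtain ⟨v, hav, hv⟩ := exists_between (lt_min ha' hc.1)
      have hvc : v ∈ Ioo a c := ⟨hav, hv.trans_le (min_le_right _ _)⟩
      filter_upwards [Ioi_mem_atTop (max (T v) (T c))] with t ht
      rw [mem_Ioi, max_lt_iff] at ht
      have hxt : x t < v := by
        rw [← hanti.lt_iff_gt (hsub hvc) (hsub (hxbij.mapsTo ht.2)), hinv.2 ht.2]
        exact ht.1
      exact hxt.trans (hv.trans_le (min_le_left _ _))
  · have hxcont : ContinuousAt x t :=
      hxanti.dual_right.continuousAt_of_image_mem_nhds (isOpen_Ioi.mem_nhds ht)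
        (show x '' Ioi (T c) ∈ 𝓝 (x t) by
          rw [hxbij.image_eq]; exact isOpen_Ioo.mem_nhds (hxbij.mapsTo ht))
    exact HasDerivAt.of_local_left_inverse hxcont (hT _ (hsub (hxbij.mapsTo ht)))
      (hT' _ (hsub (hxbij.mapsTo ht))).ne
      (eventually_of_mem (isOpen_Ioi.mem_nhds ht) fun s hs => hinv.2 hs)

end InverseFunction

section TravelTime

variable {F : ℝ → ℝ} {a b x₀ C : ℝ}

noncomputable def travelTime (F : ℝ → ℝ) (x₀ v : ℝ) : ℝ := ∫ u in v..x₀, (F u)⁻¹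

theorem hasDerivAt_travelTime (hF : ContinuousOn F (Ioo a b)) (hF₀ : ∀ u ∈ Ioo a b, F u ≠ 0)
    (hx₀ : x₀ ∈ Ioo a b) {v : ℝ} (hv : v ∈ Ioo a b) :
    HasDerivAt (travelTime F x₀) (-(F v)⁻¹) v := by
  have hinv : ContinuousOn (fun u => (F u)⁻¹) (Ioo a b) := hF.inv₀ hF₀
  exact intervalIntegral.integral_hasDerivAt_left
    (hinv.mono ((convex_Ioo a b).ordConnected.uIcc_subset hv hx₀)).intervalIntegrable
    (hinv.stronglyMeasurableAtFilter isOpen_Ioo v hv)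
    (hinv.continuousAt (isOpen_Ioo.mem_nhds hv))

theorem integral_inv_mul_sub {v : ℝ} (hv : a < v) (hx₀ : a < x₀) :
    ∫ u in v..x₀, (C * (u - a))⁻¹ = C⁻¹ * Real.log ((x₀ - a) / (v - a)) := by
  simp only [mul_inv, intervalIntegral.integral_const_mul,
    intervalIntegral.integral_comp_sub_right (fun u => u⁻¹),
    integral_inv_of_pos (sub_pos.2 hv) (sub_pos.2 hx₀)]

theorem tendsto_travelTime_nhdsGT (hF : ContinuousOn F (Ioo a b))
    (hF_pos : ∀ u ∈ Ioo a b, 0 < F u) (hF_le : ∀ u ∈ Ioo a b, F u ≤ C * (u - a))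
    (hx₀ : x₀ ∈ Ioo a b) : Tendsto (travelTime F x₀) (𝓝[>] a) atTop := by
  have hC : 0 < C :=
    pos_of_mul_pos_left ((hF_pos x₀ hx₀).trans_le (hF_le x₀ hx₀)) (sub_pos.2 hx₀.1).le
  have hlower : ∀ v ∈ Ioo a x₀, C⁻¹ * Real.log ((x₀ - a) / (v - a)) ≤ travelTime F x₀ v := by
    intro v hv
    have hsub : Icc v x₀ ⊆ Ioo a b := Icc_subset_Ioo hv.1 hx₀.2
    rw [← integral_inv_mul_sub hv.1 hx₀.1]
    refine intervalIntegral.integral_mono_on hv.2.le ?_ ?_ fun u hu => ?_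
    · refine ContinuousOn.intervalIntegrable_of_Icc hv.2.le (ContinuousOn.inv₀ (by fun_prop) ?_)
      exact fun u hu => (mul_pos hC (sub_pos.2 (hv.1.trans_le hu.1))).ne'
    · exact ((hF.inv₀ fun u hu => (hF_pos u hu).ne').mono hsub).intervalIntegrable_of_Icc hv.2.le
    · exact inv_anti₀ (hF_pos u (hsub hu)) (hF_le u (hsub hu))
  have hdist : Tendsto (fun v => v - a) (𝓝[>] a) (𝓝[>] 0) :=
    ((continuous_sub_right a).tendsto' a 0 (sub_self a)).inf
      (tendsto_principal_principal.2 fun v (hv : a < v) => sub_pos.2 hv)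
  have hbound : Tendsto (fun v => C⁻¹ * Real.log ((x₀ - a) / (v - a))) (𝓝[>] a) atTop := by
    have hratio : Tendsto (fun v => (x₀ - a) / (v - a)) (𝓝[>] a) atTop :=
      (tendsto_inv_nhdsGT_zero.comp hdist).const_mul_atTop (sub_pos.2 hx₀.1)
    exact (Real.tendsto_log_atTop.comp hratio).const_mul_atTop (inv_pos.2 hC)
  exact tendsto_atTop_mono' _ (eventually_of_mem (Ioo_mem_nhdsGT hx₀.1) hlower) hbound

theorem exists_strictAntiOn_solution_of_le_linear (hF : ContinuousOn F (Ioo a b))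
    (hF_pos : ∀ u ∈ Ioo a b, 0 < F u) (hF_le : ∀ u ∈ Ioo a b, F u ≤ C * (u - a))
    (hx₀ : x₀ ∈ Ioo a b) :
    ∃ x : ℝ → ℝ, x 0 = x₀ ∧ StrictAntiOn x (Ici 0) ∧ Tendsto x atTop (𝓝 a) ∧
      ∀ t, 0 ≤ t → x t ∈ Ioo a b ∧ HasDerivAt x (-F (x t)) t := by
  obtain ⟨c, hx₀c, hcb⟩ := exists_between hx₀.2
  obtain ⟨x, hanti, hlim, hleft, hright⟩ :=
    exists_inverse_of_hasDerivAt_neg ⟨hx₀.1.trans hx₀c, hcb⟩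
      (fun v hv => hasDerivAt_travelTime hF (fun u hu => (hF_pos u hu).ne') hx₀ hv)
      (fun v hv => neg_neg_of_pos (inv_pos.2 (hF_pos v hv)))
      (tendsto_travelTime_nhdsGT hF hF_pos hF_le hx₀)
  obtain ⟨hc, hx0⟩ := hleft x₀ ⟨hx₀.1, hx₀c⟩
  have hT₀ : travelTime F x₀ x₀ = 0 := intervalIntegral.integral_same
  rw [hT₀] at hc hx0
  have hIci : Ici 0 ⊆ Ioi (travelTime F x₀ c) := Ici_subset_Ioi.2 hc
  refine ⟨x, hx0, hanti.mono hIci, hlim, fun t ht => ?_⟩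
  obtain ⟨hxt, hderiv⟩ := hright t (hIci ht)
  exact ⟨Ioo_subset_Ioo_right hcb.le hxt, by simpa using hderiv⟩

end TravelTime

theorem StrictConcaveOn.pos_of_mem_Ioo {s : Set ℝ} {f : ℝ → ℝ} {a b u : ℝ}
    (hf : StrictConcaveOn ℝ s f) (ha : a ∈ s) (hb : b ∈ s) (hfa : 0 ≤ f a) (hfb : 0 ≤ f b)
    (hu : u ∈ Ioo a b) : 0 < f u :=
  (le_min hfa hfb).trans_lt <| hf.lt_on_openSegment ha hb (hu.1.trans hu.2).ne
    (by rwa [openSegment_eq_Ioo (hu.1.trans hu.2)])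

noncomputable def sirOrbit (σ x₀ y₀ u : ℝ) : ℝ :=
  x₀ + y₀ - u + σ⁻¹ * (Real.log u - Real.log x₀)

section SirOrbit

variable {σ x₀ y₀ : ℝ}

theorem sirOrbit_self : sirOrbit σ x₀ y₀ x₀ = y₀ := by
  simp [sirOrbit]

theorem hasDerivAt_sirOrbit {u : ℝ} (hu : u ≠ 0) :
    HasDerivAt (sirOrbit σ x₀ y₀) (-1 + σ⁻¹ * u⁻¹) u := by
  exact ((hasDerivAt_id u).const_sub (x₀ + y₀)).add
    (((Real.hasDerivAt_log hu).sub_const (Real.log x₀)).const_mul σ⁻¹)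

theorem continuousOn_sirOrbit : ContinuousOn (sirOrbit σ x₀ y₀) (Ioi 0) := fun _ hu =>
  (hasDerivAt_sirOrbit (ne_of_gt hu)).continuousAt.continuousWithinAt

theorem strictConcaveOn_sirOrbit (hσ : 0 < σ) : StrictConcaveOn ℝ (Ioi 0) (sirOrbit σ x₀ y₀) := by
  refine ⟨convex_Ioi 0, fun u hu v hv huv s t hs ht hst => ?_⟩
  have hlog := mul_lt_mul_of_pos_left (strictConcaveOn_log_Ioi.2 hu hv huv hs ht hst)
    (inv_pos.2 hσ)
  simp only [smul_eq_mul, sirOrbit] at hlog ⊢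
  linear_combination hlog + (x₀ + y₀ - σ⁻¹ * Real.log x₀) * hst

theorem tendsto_sirOrbit_nhdsGT_zero (hσ : 0 < σ) :
    Tendsto (sirOrbit σ x₀ y₀) (𝓝[>] 0) atBot := by
  have hcont : Tendsto (fun u => x₀ + y₀ - u - σ⁻¹ * Real.log x₀) (𝓝[>] 0)
      (𝓝 (x₀ + y₀ - 0 - σ⁻¹ * Real.log x₀)) :=
    ((continuous_const.sub continuous_id).sub continuous_const).tendsto' 0 _ rfl |>.mono_left
      nhdsWithin_le_nhds
  refine (hcont.add_atBot (Real.tendsto_log_nhdsGT_zero.const_mul_atBot (inv_pos.2 hσ))).congr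
    fun u => ?_
  simp only [sirOrbit]; ring

theorem sirOrbit_sub_le (hσ : 0 < σ) {u v : ℝ} (hu : 0 < u) (hv : 0 < v) :
    sirOrbit σ x₀ y₀ u - sirOrbit σ x₀ y₀ v ≤ (u - v) * ((σ * v)⁻¹ - 1) := by
  have hlog : Real.log u - Real.log v ≤ u / v - 1 := by
    rw [← Real.log_div hu.ne' hv.ne']
    exact Real.log_le_sub_one_of_pos (div_pos hu hv)
  calc sirOrbit σ x₀ y₀ u - sirOrbit σ x₀ y₀ v = -(u - v) + σ⁻¹ * (Real.log u - Real.log v) := by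
        simp only [sirOrbit]; ring
    _ ≤ -(u - v) + σ⁻¹ * (u / v - 1) := by gcongr
    _ = (u - v) * ((σ * v)⁻¹ - 1) := by field_simp; ring

theorem sirOrbit_le_of_sirOrbit_eq_zero (hσ : 0 < σ) {u v : ℝ} (hv : 0 < v)
    (hroot : sirOrbit σ x₀ y₀ v = 0) (hvu : v ≤ u) :
    sirOrbit σ x₀ y₀ u ≤ (σ * v)⁻¹ * (u - v) := by
  have h := sirOrbit_sub_le hσ (hv.trans_le hvu) hv (x₀ := x₀) (y₀ := y₀)
  rw [hroot, sub_zero] at h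
  nlinarith

theorem exists_sirOrbit_eq_zero (hσ : 0 < σ) (hx₀ : 0 < x₀) (hy₀ : 0 < y₀) :
    ∃ xinf ∈ Ioo 0 x₀, sirOrbit σ x₀ y₀ xinf = 0 := by
  obtain ⟨δ, ⟨hδ, hδx₀⟩, hgδ⟩ := (Eventually.and (Ioo_mem_nhdsGT hx₀)
    ((tendsto_sirOrbit_nhdsGT_zero hσ).eventually_lt_atBot 0)).exists
  obtain ⟨xinf, hxinf, hroot⟩ := intermediate_value_Ioo hδx₀.le
    (continuousOn_sirOrbit.mono fun u hu => hδ.trans_le hu.1)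
    ⟨hgδ, by rwa [sirOrbit_self]⟩
  exact ⟨xinf, ⟨hδ.trans hxinf.1, hxinf.2⟩, hroot⟩

theorem lt_inv_of_sirOrbit_eq_zero (hσ : 0 < σ) (hy₀ : 0 < y₀) {xinf : ℝ}
    (hxinf : xinf ∈ Ioo 0 x₀) (hroot : sirOrbit σ x₀ y₀ xinf = 0) : xinf < 1 / σ := by
  have h := sirOrbit_sub_le hσ (hxinf.1.trans hxinf.2) hxinf.1 (x₀ := x₀) (y₀ := y₀)
  rw [sirOrbit_self, hroot, sub_zero] at h
  have hK : 1 < (σ * xinf)⁻¹ :=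
    sub_pos.1 (pos_of_mul_pos_right (hy₀.trans_le h) (sub_pos.2 hxinf.2).le)
  have := (one_lt_inv₀ (mul_pos hσ hxinf.1)).1 hK
  rw [lt_div_iff₀ hσ]
  linarith

theorem mul_exp_eq_of_sirOrbit_eq_zero (hσ : σ ≠ 0) (hx₀ : 0 < x₀) {v : ℝ} (hv : 0 < v)
    (hroot : sirOrbit σ x₀ y₀ v = 0) :
    v * Real.exp (-σ * v) = x₀ * Real.exp (-σ * (x₀ + y₀)) := by
  have hlog : Real.log v + -σ * v = Real.log x₀ + -σ * (x₀ + y₀) := by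
    have := congrArg (σ * ·) hroot
    simp only [sirOrbit, mul_zero] at this
    field_simp at this
    linarith
  calc v * Real.exp (-σ * v) = Real.exp (Real.log v + -σ * v) := by
        rw [Real.exp_add, Real.exp_log hv]
    _ = x₀ * Real.exp (-σ * (x₀ + y₀)) := by
        rw [hlog, Real.exp_add, Real.exp_log hx₀]

theorem HasDerivAt.sirOrbit_comp {x : ℝ → ℝ} {γ t : ℝ} (hσ : σ ≠ 0) (hxt : 0 < x t)
    (hx : HasDerivAt x (-(γ * σ * x t * sirOrbit σ x₀ y₀ (x t))) t) :
    HasDerivAt (fun s => sirOrbit σ x₀ y₀ (x s))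
      (γ * σ * x t * sirOrbit σ x₀ y₀ (x t) - γ * sirOrbit σ x₀ y₀ (x t)) t := by
  refine ((hasDerivAt_sirOrbit (σ := σ) (x₀ := x₀) (y₀ := y₀) hxt.ne').comp t hx).congr_deriv ?_
  field_simp
  ring

end SirOrbit

theorem exists_sir_susceptible_trajectory {γ σ x₀ y₀ : ℝ} (hγ : 0 < γ) (hσ : 0 < σ)
    (hx₀ : 0 < x₀) (hy₀ : 0 < y₀) :
    ∃ xinf ∈ Ioo 0 x₀, sirOrbit σ x₀ y₀ xinf = 0 ∧ ∃ x : ℝ → ℝ, x 0 = x₀ ∧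
      StrictAntiOn x (Ici 0) ∧ Tendsto x atTop (𝓝 xinf) ∧ ∀ t, 0 ≤ t → 0 < x t ∧
        HasDerivAt x (-(γ * σ * x t * sirOrbit σ x₀ y₀ (x t))) t := by
  obtain ⟨xinf, hxinf, hroot⟩ := exists_sirOrbit_eq_zero hσ hx₀ hy₀
  have hpos_near : ∀ᶠ u in 𝓝 x₀, 0 < sirOrbit σ x₀ y₀ u :=
    (continuousOn_sirOrbit.continuousAt (Ioi_mem_nhds hx₀)).eventually_const_lt
      (by rwa [sirOrbit_self])
  obtain ⟨b, hgb, hx₀b⟩ := ((hpos_near.filter_mono nhdsWithin_le_nhds).and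
    (self_mem_nhdsWithin : ∀ᶠ u in 𝓝[>] x₀, x₀ < u)).exists
  have hg_pos : ∀ u ∈ Ioo xinf b, 0 < sirOrbit σ x₀ y₀ u := fun u hu =>
    (strictConcaveOn_sirOrbit hσ).pos_of_mem_Ioo hxinf.1 (hx₀.trans hx₀b) hroot.ge hgb.le hu
  have hF : ContinuousOn (fun u => γ * σ * u * sirOrbit σ x₀ y₀ u) (Ioo xinf b) :=
    (continuousOn_const.mul continuousOn_id).mul
      (continuousOn_sirOrbit.mono fun u hu => hxinf.1.trans hu.1)
  have hF_le : ∀ u ∈ Ioo xinf b,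
      γ * σ * u * sirOrbit σ x₀ y₀ u ≤ γ * σ * b * (σ * xinf)⁻¹ * (u - xinf) := by
    intro u hu
    have hg_le := sirOrbit_le_of_sirOrbit_eq_zero hσ hxinf.1 hroot hu.1.le
    have hu₀ : 0 < u := hxinf.1.trans hu.1
    calc γ * σ * u * sirOrbit σ x₀ y₀ u ≤ γ * σ * u * ((σ * xinf)⁻¹ * (u - xinf)) := by
          gcongr
      _ ≤ γ * σ * b * ((σ * xinf)⁻¹ * (u - xinf)) := by
          have hbound_nonneg : 0 ≤ (σ * xinf)⁻¹ * (u - xinf) :=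
            mul_nonneg (inv_pos.2 (mul_pos hσ hxinf.1)).le (sub_pos.2 hu.1).le
          gcongr
          exact hu.2.le
      _ = γ * σ * b * (σ * xinf)⁻¹ * (u - xinf) := by ring
  obtain ⟨x, hx0, hanti, hlim, hsol⟩ := exists_strictAntiOn_solution_of_le_linear hF
    (fun u hu => by have := hg_pos u hu; have := hxinf.1.trans hu.1; positivity) hF_le
    ⟨hxinf.2, hx₀b⟩
  exact ⟨xinf, hxinf, hroot, x, hx0, hanti, hlim, fun t ht =>
    ⟨hxinf.1.trans (hsol t ht).1.1, (hsol t ht).2⟩⟩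

theorem sir_long_time_behaviour_general
    (γ σ x₀ y₀ : ℝ) (hγ : 0 < γ) (hσ : 0 < σ)
    (hx₀ : 0 < x₀) (hy₀ : 0 < y₀) :
    ∃ x y : ℝ → ℝ,
      (∀ t ∈ Ici (0:ℝ), HasDerivWithinAt x (-γ * σ * x t * y t) (Ici (0:ℝ)) t) ∧
      (∀ t ∈ Ici (0:ℝ), HasDerivWithinAt y (γ * σ * x t * y t - γ * y t) (Ici (0:ℝ)) t) ∧
      x 0 = x₀ ∧ y 0 = y₀ ∧
      StrictAntiOn x (Ici (0:ℝ)) ∧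
      Tendsto y atTop (nhds 0) ∧
      ∃ xinf : ℝ, Tendsto x atTop (nhds xinf) ∧
        0 < xinf ∧ xinf < 1 / σ ∧ xinf < x₀ ∧
        xinf * Real.exp (-σ * xinf) = x₀ * Real.exp (-σ * (x₀ + y₀)) := by
  obtain ⟨xinf, hxinf, hroot, x, hx0, hanti, hlim, hsol⟩ :=
    exists_sir_susceptible_trajectory hγ hσ hx₀ hy₀
  have hy_lim : Tendsto (fun t => sirOrbit σ x₀ y₀ (x t)) atTop (𝓝 0) :=
    hroot ▸ (continuousOn_sirOrbit.continuousAt (Ioi_mem_nhds hxinf.1)).tendsto.comp hlim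
  refine ⟨x, fun t => sirOrbit σ x₀ y₀ (x t), fun t ht => ?_, fun t ht => ?_,
    hx0, by simp only [hx0, sirOrbit_self], hanti, hy_lim, xinf, hlim, hxinf.1,
    lt_inv_of_sirOrbit_eq_zero hσ hy₀ hxinf hroot, hxinf.2,
    mul_exp_eq_of_sirOrbit_eq_zero hσ.ne' hx₀ hxinf.1 hroot⟩
  · simpa only [neg_mul] using (hsol t ht).2.hasDerivWithinAt
  · exact ((hsol t ht).2.sirOrbit_comp hσ.ne' (hsol t ht).1).hasDerivWithinAt

/-- For the SIR system with constant reproduction number `σ > 0` and recovery rate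
`γ > 0` and initial condition in `D`, the solution exists for all `t ≥ 0`, the
susceptible fraction `x` is strictly decreasing, `y(t) → 0`, and `x(t)` converges to
a limit `x∞` with `0 < x∞ < 1/σ`, `x∞ < x₀` and `x∞ e^{-σ x∞} = x₀ e^{-σ (x₀+y₀)}`. -/
theorem sir_long_time_behaviour
    (γ σ x₀ y₀ : ℝ) (hγ : 0 < γ) (hσ : 0 < σ)
    (hx₀ : 0 < x₀) (hy₀ : 0 < y₀) (hxy₀ : x₀ + y₀ ≤ 1) :
    ∃ x y : ℝ → ℝ,
      (∀ t ∈ Ici (0:ℝ), HasDerivWithinAt x (-γ * σ * x t * y t) (Ici (0:ℝ)) t) ∧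
      (∀ t ∈ Ici (0:ℝ), HasDerivWithinAt y (γ * σ * x t * y t - γ * y t) (Ici (0:ℝ)) t) ∧
      x 0 = x₀ ∧ y 0 = y₀ ∧
      StrictAntiOn x (Ici (0:ℝ)) ∧
      Tendsto y atTop (nhds 0) ∧
      ∃ xinf : ℝ, Tendsto x atTop (nhds xinf) ∧
        0 < xinf ∧ xinf < 1 / σ ∧ xinf < x₀ ∧
        xinf * Real.exp (-σ * xinf) = x₀ * Real.exp (-σ * (x₀ + y₀)) :=
  sir_long_time_behaviour_general γ σ x₀ y₀ hγ hσ hx₀ hy₀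
end

section
/- Let σ > 0, x > 0 and y > 0. Then there exists a unique real number z with 0 < z < 1/σ such that z · exp(-σ z) = x · exp(-σ (x + y)). -/
/-!
The map `f z = z e^{-σ z}` has derivative `(1 - σ z) e^{-σ z}`, so it increases strictly on
`[0, 1/σ]` from `f 0 = 0` to its global maximum `f (1/σ) = e^{-1}/σ`. The right-hand side
`x e^{-σ (x + y)} = f x · e^{-σ y}` lies strictly between these two values because `x > 0` and
`y > 0`, so the intermediate value theorem gives a solution and strict monotonicity makes it unique.
-/

open Real Set

lemma hasDerivAt_mul_exp_neg_mul (σ z : ℝ) :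
    HasDerivAt (fun z => z * exp (-σ * z)) ((1 - σ * z) * exp (-σ * z)) z :=
  ((hasDerivAt_id' z).mul ((hasDerivAt_id' z).const_mul (-σ)).exp).congr_deriv (by ring)

lemma strictMonoOn_mul_exp_neg_mul (σ : ℝ) :
    StrictMonoOn (fun z => z * exp (-σ * z)) (Icc 0 (1 / σ)) := by
  refine strictMonoOn_of_deriv_pos (convex_Icc _ _) (by fun_prop) fun z hz => ?_
  rw [interior_Icc] at hz
  have hσ : 0 < σ := one_div_pos.mp (hz.1.trans hz.2)
  have hσz : σ * z < 1 := (lt_div_iff₀' hσ).mp (by simpa using hz.2)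
  rw [(hasDerivAt_mul_exp_neg_mul σ z).deriv]
  exact mul_pos (by linarith) (exp_pos _)

lemma mul_exp_neg_mul_le {σ : ℝ} (hσ : 0 < σ) (z : ℝ) :
    z * exp (-σ * z) ≤ 1 / σ * exp (-σ * (1 / σ)) :=
  calc z * exp (-σ * z) = σ * z * exp (-(σ * z)) / σ := by field_simp
    _ ≤ exp (-1) / σ := by gcongr; exact mul_exp_neg_le_exp_neg_one _
    _ = 1 / σ * exp (-σ * (1 / σ)) := by field_simp

/-- For `σ > 0`, `x > 0`, `y > 0`, there is a unique `z ∈ (0, 1/σ)` with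
`z e^{-σ z} = x e^{-σ (x + y)}`. -/
theorem xinf_exists_unique (σ x y : ℝ) (hσ : 0 < σ) (hx : 0 < x) (hy : 0 < y) :
    ∃! z : ℝ, z ∈ Set.Ioo 0 (1 / σ) ∧
      z * Real.exp (-σ * z) = x * Real.exp (-σ * (x + y)) := by
  set f : ℝ → ℝ := fun z => z * exp (-σ * z)
  have hc_pos : f 0 < x * exp (-σ * (x + y)) := by simp only [f, zero_mul]; positivity
  have hc_lt : x * exp (-σ * (x + y)) < f (1 / σ) :=
    calc x * exp (-σ * (x + y)) = f x * exp (-σ * y) := by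
          simp only [f, mul_assoc, ← exp_add, mul_add]
      _ < f x := mul_lt_of_lt_one_right (by positivity) (exp_lt_one_iff.mpr (by nlinarith))
      _ ≤ f (1 / σ) := mul_exp_neg_mul_le hσ x
  obtain ⟨z, hz, hfz⟩ :=
    intermediate_value_Ioo (by positivity) (by fun_prop : Continuous f).continuousOn ⟨hc_pos, hc_lt⟩
  refine ⟨z, ⟨hz, hfz⟩, fun w ⟨hw, hfw⟩ => ?_⟩
  exact (strictMonoOn_mul_exp_neg_mul σ).injOn (Ioo_subset_Icc_self hw) (Ioo_subset_Icc_self hz)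
    (hfw.trans hfz.symm)
end

section
/- Let γ > 0, K > 0, and let σ : [a,b] → ℝ be measurable. Suppose (x, y) solves the SIR system x'(t) = -γ σ(t) x(t) y(t), y'(t) = γ σ(t) x(t) y(t) - γ y(t) on [a,b] with x(t) > 0 and y(t) = K for all t ∈ [a,b]. Then σ(t) x(t) = 1 for almost every t ∈ [a,b], x(t) = x(a) - γ K (t - a) for all t ∈ [a,b], and consequently σ(t) = 1/(x(a) - γ K (t - a)) for almost every t ∈ [a,b]. -/
open Set MeasureTheory

/-! On a boundary arc `y ≡ K`, so `y' = γ y (σ x - 1)` vanishes in the interior of the arc, which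
forces `σ x = 1` there. Then `x' = -γ σ x y = -γ K` is constant, so `x` is affine by the mean value
theorem, and `σ = 1 / x` on the interior; the two endpoints are a null set. -/

theorem eq_add_mul_sub_of_hasDerivAt_Ioo {f : ℝ → ℝ} {c a b : ℝ}
    (hcont : ContinuousOn f (Icc a b)) (hderiv : ∀ t ∈ Ioo a b, HasDerivAt f c t) :
    ∀ t ∈ Icc a b, f t = f a + c * (t - a) := by
  intro t ⟨hat, htb⟩
  rcases hat.eq_or_lt with rfl | hat
  · ring
  obtain ⟨_, -, hslope⟩ := exists_hasDerivAt_eq_slope f (fun _ => c) hat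
    (hcont.mono (Icc_subset_Icc_right htb))
    fun s hs => hderiv s ⟨hs.1, hs.2.trans_le htb⟩
  rw [hslope, div_mul_cancel₀ _ (sub_ne_zero.mpr hat.ne')]
  ring

theorem hasDerivAt_eq_zero_of_eqOn_Icc {f : ℝ → ℝ} {f' c a b t : ℝ}
    (hf : HasDerivAt f f' t) (hconst : EqOn f (fun _ => c) (Icc a b)) (ht : t ∈ Ioo a b) :
    f' = 0 :=
  hf.unique <| (hasDerivAt_const t c).congr_of_eventuallyEq <|
    Filter.mem_of_superset (Icc_mem_nhds ht.1 ht.2) hconst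

section BoundaryArc

variable {γ K a b : ℝ} {σ x y : ℝ → ℝ}

theorem mul_eq_one_of_boundary_arc (hγ : 0 < γ) (hK : 0 < K)
    (hy : ∀ t ∈ Icc a b, HasDerivWithinAt y (γ * σ t * x t * y t - γ * y t) (Icc a b) t)
    (hyK : ∀ t ∈ Icc a b, y t = K) :
    ∀ t ∈ Ioo a b, σ t * x t = 1 := by
  intro t ht
  have hy' := (hy t (Ioo_subset_Icc_self ht)).hasDerivAt (Icc_mem_nhds ht.1 ht.2)
  have hzero := hasDerivAt_eq_zero_of_eqOn_Icc hy' hyK ht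
  rw [hyK t (Ioo_subset_Icc_self ht)] at hzero
  have hγK : γ * K * (σ t * x t - 1) = 0 := by linear_combination hzero
  simpa [sub_eq_zero, hγ.ne', hK.ne'] using hγK

theorem eq_sub_mul_of_boundary_arc
    (hx : ∀ t ∈ Icc a b, HasDerivWithinAt x (-γ * σ t * x t * y t) (Icc a b) t)
    (hyK : ∀ t ∈ Icc a b, y t = K) (hσx : ∀ t ∈ Ioo a b, σ t * x t = 1) :
    ∀ t ∈ Icc a b, x t = x a - γ * K * (t - a) := by
  have hcont : ContinuousOn x (Icc a b) := fun t ht => (hx t ht).continuousWithinAt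
  have hderiv : ∀ t ∈ Ioo a b, HasDerivAt x (-(γ * K)) t := by
    intro t ht
    refine ((hx t (Ioo_subset_Icc_self ht)).hasDerivAt (Icc_mem_nhds ht.1 ht.2)).congr_deriv ?_
    rw [hyK t (Ioo_subset_Icc_self ht)]
    linear_combination -(γ * K) * hσx t ht
  intro t ht
  rw [eq_add_mul_sub_of_hasDerivAt_Ioo hcont hderiv t ht]
  ring

end BoundaryArc

theorem boundary_arc_control_general
    (γ K a b : ℝ) (hγ : 0 < γ) (hK : 0 < K)
    (σ x y : ℝ → ℝ)
    (hx : ∀ t ∈ Icc a b, HasDerivWithinAt x (-γ * σ t * x t * y t) (Icc a b) t)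
    (hy : ∀ t ∈ Icc a b,
      HasDerivWithinAt y (γ * σ t * x t * y t - γ * y t) (Icc a b) t)
    (hyK : ∀ t ∈ Icc a b, y t = K) :
    (∀ᵐ t ∂(volume.restrict (Icc a b)), σ t * x t = 1) ∧
    (∀ t ∈ Icc a b, x t = x a - γ * K * (t - a)) ∧
    (∀ᵐ t ∂(volume.restrict (Icc a b)), σ t = 1 / (x a - γ * K * (t - a))) := by
  have hσx := mul_eq_one_of_boundary_arc hγ hK hy hyK
  have hxaff := eq_sub_mul_of_boundary_arc hx hyK hσx
  rw [← Measure.restrict_congr_set Ioo_ae_eq_Icc]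
  refine ⟨ae_restrict_of_forall_mem measurableSet_Ioo hσx, hxaff,
    ae_restrict_of_forall_mem measurableSet_Ioo fun t ht => ?_⟩
  rw [← hxaff t (Ioo_subset_Icc_self ht)]
  exact eq_one_div_of_mul_eq_one_left (hσx t ht)

/-- On a boundary arc where `y ≡ K`, the boundary control satisfies `σ(t) x(t) = 1`
a.e., the susceptible fraction is affine, `x(t) = x(a) - γ K (t - a)`, and hence
`σ(t) = 1 / (x(a) - γ K (t - a))` a.e. -/
theorem boundary_arc_control
    (γ K a b : ℝ) (hγ : 0 < γ) (hK : 0 < K)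
    (σ x y : ℝ → ℝ) (hσmeas : Measurable σ)
    (hx : ∀ t ∈ Icc a b, HasDerivWithinAt x (-γ * σ t * x t * y t) (Icc a b) t)
    (hy : ∀ t ∈ Icc a b,
      HasDerivWithinAt y (γ * σ t * x t * y t - γ * y t) (Icc a b) t)
    (hxpos : ∀ t ∈ Icc a b, 0 < x t)
    (hyK : ∀ t ∈ Icc a b, y t = K) :
    (∀ᵐ t ∂(volume.restrict (Icc a b)), σ t * x t = 1) ∧
    (∀ t ∈ Icc a b, x t = x a - γ * K * (t - a)) ∧
    (∀ᵐ t ∂(volume.restrict (Icc a b)), σ t = 1 / (x a - γ * K * (t - a))) :=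
  boundary_arc_control_general γ K a b hγ hK σ x y hx hy hyK
end

section
/- Let γ > 0, K > 0, 0 ≤ σ_s < σ_f, and let τ, t₁ ∈ ℝ and x₁ > 1/σ_f. Define F(t₂) = τ + σ_f (t₂ - t₁)/(σ_s - σ_f) + (γ K (σ_s - σ_f))⁻¹ · ln(1 - γ K (t₂ - t₁)/x₁) on the set I = {t₂ ≥ t₁ : x₁ - γ K (t₂ - t₁) > 1/σ_f}. Then F is strictly decreasing on I, F(t₁) = τ, and F(t₂) ≤ τ for all t₂ ∈ I. -/
open Set

/-- The maximal admissible duration `F(t₂)` of the strict quarantine starting at `t₂`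
is strictly decreasing, `F(t₁) = τ`, and `F(t₂) ≤ τ` on the admissible set. -/
theorem F_strictAnti
    (γ K σs σf τ t₁ x₁ : ℝ) (hγ : 0 < γ) (hK : 0 < K)
    (hσs : 0 ≤ σs) (hσsf : σs < σf) (hx₁ : 1 / σf < x₁)
    (F : ℝ → ℝ)
    (hF : ∀ t₂, F t₂ = τ + σf * (t₂ - t₁) / (σs - σf)
      + (γ * K * (σs - σf))⁻¹ * Real.log (1 - γ * K * (t₂ - t₁) / x₁))
    (I : Set ℝ)
    (hI : I = {t₂ : ℝ | t₁ ≤ t₂ ∧ 1 / σf < x₁ - γ * K * (t₂ - t₁)}) :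
    StrictAntiOn F I ∧ F t₁ = τ ∧ ∀ t₂ ∈ I, F t₂ ≤ τ := by
  have hσf : 0 < σf := lt_of_le_of_lt hσs hσsf
  have hinvσf : 0 < 1 / σf := by positivity
  have hx0 : 0 < x₁ := lt_trans hinvσf hx₁
  have hc : 0 < γ * K := by positivity
  have hd : σs - σf < 0 := by linarith
  have hD : γ * K * (σs - σf) < 0 := mul_neg_of_pos_of_neg hc hd
  have hDinv : (γ * K * (σs - σf))⁻¹ < 0 := inv_lt_zero.mpr hD
  subst hI
  have hmono : StrictAntiOn F {t₂ : ℝ | t₁ ≤ t₂ ∧ 1 / σf < x₁ - γ * K * (t₂ - t₁)} := by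
    intro s hs t ht hst
    obtain ⟨hs1, hs2⟩ := hs
    obtain ⟨ht1, ht2⟩ := ht
    set As := 1 - γ * K * (s - t₁) / x₁ with hAsdef
    set At := 1 - γ * K * (t - t₁) / x₁ with hAtdef
    have hAt : 0 < At := by
      rw [hAtdef, sub_pos, div_lt_one hx0]; linarith
    have hAs : 0 < As := by
      rw [hAsdef, sub_pos, div_lt_one hx0]; linarith
    have hlt : At < As := by
      rw [hAsdef, hAtdef]
      have h1 : γ * K * (s - t₁) < γ * K * (t - t₁) := by nlinarith
      have h2 : γ * K * (s - t₁) / x₁ < γ * K * (t - t₁) / x₁ :=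
        (div_lt_div_iff_of_pos_right hx0).mpr h1
      linarith
    -- key: log As - log At < γ*K*σf*(t-s)
    have hratio : 1 < As / At := (one_lt_div hAt).mpr hlt
    have hlog : Real.log (As / At) < As / At - 1 :=
      Real.log_lt_sub_one_of_pos (by positivity) (ne_of_gt hratio)
    have hAtx : At = (x₁ - γ * K * (t - t₁)) / x₁ := by
      rw [hAtdef]; field_simp
    have hden : 0 < x₁ - γ * K * (t - t₁) := lt_trans hinvσf ht2
    have hsub : As / At - 1 = γ * K * (t - s) / (x₁ - γ * K * (t - t₁)) := by
      rw [hAsdef, hAtx]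
      field_simp
      ring
    have hbound : γ * K * (t - s) / (x₁ - γ * K * (t - t₁)) < γ * K * σf * (t - s) := by
      rw [div_lt_iff₀ hden]
      have hts : 0 < t - s := by linarith
      have h1 : 1 < σf * (x₁ - γ * K * (t - t₁)) := by
        rw [div_lt_iff₀ hσf] at ht2; linarith [mul_comm σf (x₁ - γ * K * (t - t₁))]
      have h2 := mul_lt_mul_of_pos_left h1 (mul_pos hc hts)
      nlinarith [h2]
    have key : Real.log As - Real.log At < γ * K * σf * (t - s) := by
      rw [← Real.log_div (ne_of_gt hAs) (ne_of_gt hAt)]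
      calc Real.log (As / At) < As / At - 1 := hlog
        _ = γ * K * (t - s) / (x₁ - γ * K * (t - t₁)) := hsub
        _ < γ * K * σf * (t - s) := hbound
    rw [hF s, hF t]
    have e1 : σf * (t - t₁) / (σs - σf) - σf * (s - t₁) / (σs - σf)
        = (γ * K * (σs - σf))⁻¹ * (γ * K * σf * (t - s)) := by
      have hne1 : σs - σf ≠ 0 := ne_of_lt hd
      have hne2 : γ * K ≠ 0 := ne_of_gt hc
      field_simp
      ring
    have e2 : (γ * K * (σs - σf))⁻¹ * (γ * K * σf * (t - s))
        < (γ * K * (σs - σf))⁻¹ * (Real.log As - Real.log At) :=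
      mul_lt_mul_of_neg_left key hDinv
    have e3 : (γ * K * (σs - σf))⁻¹ * (Real.log As - Real.log At)
        = (γ * K * (σs - σf))⁻¹ * Real.log As - (γ * K * (σs - σf))⁻¹ * Real.log At := by
      ring
    rw [e3] at e2
    linarith [e1 ▸ e2]
  have hτ : F t₁ = τ := by
    rw [hF t₁]
    simp
  refine ⟨hmono, hτ, ?_⟩
  intro t₂ ht₂
  obtain ⟨h1, h2⟩ := ht₂
  rcases eq_or_lt_of_le h1 with h | h
  · rw [← h, hτ]
  · have ht₁I : t₁ ∈ {t₂ : ℝ | t₁ ≤ t₂ ∧ 1 / σf < x₁ - γ * K * (t₂ - t₁)} :=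
      ⟨le_refl t₁, by simpa using hx₁⟩
    have hlt := hmono ht₁I ⟨h1, h2⟩ h
    linarith
end

section
/- Let γ > 0, K > 0, 0 ≤ σ_s < σ_f with σ_s < 1, and let τ, t₁ ∈ ℝ and x₁ with 1/σ_f < x₁ ≤ 1. Define F(t₂) = τ + σ_f (t₂ - t₁)/(σ_s - σ_f) + (γ K (σ_s - σ_f))⁻¹ · ln(1 - γ K (t₂ - t₁)/x₁) on the set I = {t₂ ≥ t₁ : x₁ - γ K (t₂ - t₁) > 1/σ_f}. Then the function H(t₂) = F(t₂) + t₂ is strictly increasing on I. -/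
/-!
Write `w = 1 - γ K (t₂ - t₁) / x₁`, which decreases strictly in `t₂` and lies in `(0, 1]` on `I`.
Eliminating `t₂` in favour of `w` turns `H` into `τ + t₁ + (g w - g 1) / (γ K (σ_f - σ_s))` with
`g w = σ_s x₁ w - log w`, and `g` is strictly decreasing on `(0, 1]` because `σ_s x₁ < 1`.
-/

open Set

theorem strictAntiOn_mul_sub_log {σ : ℝ} (hσ : σ < 1) :
    StrictAntiOn (fun w => σ * w - Real.log w) (Ioc 0 1) := by
  rintro v ⟨hv, -⟩ u ⟨hu, hu1⟩ hvu
  have hlog : 1 - v / u ≤ Real.log u - Real.log v := by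
    rw [← Real.log_div hu.ne' hv.ne', ← inv_div]
    exact Real.one_sub_inv_le_log_of_pos (div_pos hu hv)
  have hgap : u - v ≤ 1 - v / u := by
    rw [one_sub_div hu.ne']
    exact le_div_self (by linarith) hu hu1
  have hslope : σ * (u - v) < 1 * (u - v) := mul_lt_mul_of_pos_right hσ (sub_pos.2 hvu)
  show σ * u - Real.log u < σ * v - Real.log v
  linarith

/-- The end time `H(t₂) = F(t₂) + t₂` of the strict quarantine of maximal duration
starting at `t₂` is strictly increasing on the admissible set. -/
theorem H_strictMono
    (γ K σs σf τ t₁ x₁ : ℝ) (hγ : 0 < γ) (hK : 0 < K)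
    (hσs : 0 ≤ σs) (hσsf : σs < σf) (hσs1 : σs < 1)
    (hx₁ : 1 / σf < x₁) (hx₁le : x₁ ≤ 1)
    (F : ℝ → ℝ)
    (hF : ∀ t₂, F t₂ = τ + σf * (t₂ - t₁) / (σs - σf)
      + (γ * K * (σs - σf))⁻¹ * Real.log (1 - γ * K * (t₂ - t₁) / x₁))
    (I : Set ℝ)
    (hI : I = {t₂ : ℝ | t₁ ≤ t₂ ∧ 1 / σf < x₁ - γ * K * (t₂ - t₁)}) :
    StrictMonoOn (fun t₂ => F t₂ + t₂) I := by
  have hσf : 0 < σf := hσs.trans_lt hσsf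
  have hx₁pos : 0 < x₁ := (one_div_pos.2 hσf).trans hx₁
  have ha : 0 < γ * K := mul_pos hγ hK
  set w : ℝ → ℝ := fun t => 1 - γ * K * (t - t₁) / x₁ with hw_def
  have hH : ∀ t, F t + t = τ + t₁ + ((σs * x₁ * w t - Real.log (w t)) - σs * x₁)
      / (γ * K * (σf - σs)) := by
    intro t
    have hne : σs - σf ≠ 0 := by linarith
    have hne' : σf - σs ≠ 0 := by linarith
    rw [hF, hw_def]
    field_simp [hγ.ne', hK.ne', hx₁pos.ne']
    ring
  have hw_mem : ∀ t ∈ I, w t ∈ Ioc 0 1 := by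
    intro t ht
    rw [hI] at ht
    obtain ⟨ht₁, hpos⟩ := ht
    have hshift : 0 ≤ γ * K * (t - t₁) := mul_nonneg ha.le (by linarith)
    refine ⟨?_, by simp only [hw_def]; linarith [div_nonneg hshift hx₁pos.le]⟩
    simp only [hw_def, one_sub_div hx₁pos.ne']
    exact div_pos ((one_div_pos.2 hσf).trans hpos) hx₁pos
  have hw_anti : StrictAnti w := fun s t hst => by
    simp only [hw_def]
    gcongr
  have hg := strictAntiOn_mul_sub_log (σ := σs * x₁) (by nlinarith)
  intro s hs t ht hst
  simp only [hH]
  gcongr τ + t₁ + (?_ - _) / _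
  exact hg (hw_mem t ht) (hw_mem s hs) (hw_anti hst)
end

section
/- Let γ > 0 and σ ∈ ℝ, and let (X, Y) solve the SIR system X'(s) = -γ σ X(s) Y(s), Y'(s) = γ σ X(s) Y(s) - γ Y(s) on [t₀, t₁] with X(s) > 0 and Y(s) > 0 for all s. Let (u, v) solve the linearized system u'(s) = -γ σ (Y(s) u(s) + X(s) v(s)), v'(s) = γ σ Y(s) u(s) + γ (σ X(s) - 1) v(s) with u(t₀) = 1 and v(t₀) = -1. Then for all s ∈ [t₀, t₁]: u(s) = X(s)/X(t₀) + γ σ (X(s) Y(s)/X(t₀)) ∫_{t₀}^{s} X(r)/Y(r) dr, v(s) = -X(s)/X(t₀) + γ ((1 - σ X(s)) Y(s)/X(t₀)) ∫_{t₀}^{s} X(r)/Y(r) dr, and u(s) + v(s) = γ (Y(s)/X(t₀)) ∫_{t₀}^{s} X(r)/Y(r) dr. -/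
/-!
Two first integrals solve the linear system explicitly. Along the flow `(u / X)' = -γ σ v` and
`(u + v)' = -γ v`, so `u / X - σ (u + v)` is constant, equal to `1 / X t₀`. Substituting this
into the derivative of `(u + v) / Y` gives `((u + v) / Y)' = γ X / (X t₀ Y)`, and `(u + v) / Y`
vanishes at `t₀`; integrating yields `u + v`, and then `u` from the first integral.
-/

open Set intervalIntegral

theorem eq_of_hasDerivWithinAt_Icc_eq {f g f' : ℝ → ℝ} {a b : ℝ}
    (hf : ∀ x ∈ Icc a b, HasDerivWithinAt f (f' x) (Icc a b) x)
    (hg : ∀ x ∈ Icc a b, HasDerivWithinAt g (f' x) (Icc a b) x) (ha : f a = g a) :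
    ∀ x ∈ Icc a b, f x = g x := by
  have toIci : ∀ {h : ℝ → ℝ}, (∀ x ∈ Icc a b, HasDerivWithinAt h (f' x) (Icc a b) x) →
      ∀ x ∈ Ico a b, HasDerivWithinAt h (f' x) (Ici x) x :=
    fun hh x hx => (hh x (Ico_subset_Icc_self hx)).mono_of_mem_nhdsWithin
      (Icc_mem_nhdsGE_of_mem hx)
  exact eq_of_has_deriv_right_eq (toIci hf) (toIci hg)
    (fun x hx => (hf x hx).continuousWithinAt) (fun x hx => (hg x hx).continuousWithinAt) ha

theorem ContinuousOn.hasDerivWithinAt_integral_Icc {f : ℝ → ℝ} {a b : ℝ}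
    (hf : ContinuousOn f (Icc a b)) {x : ℝ} (hx : x ∈ Icc a b) :
    HasDerivWithinAt (fun y => ∫ r in a..y, f r) (f x) (Icc a b) x := by
  have : Fact (x ∈ Icc a b) := ⟨hx⟩
  exact integral_hasDerivWithinAt_right
    ((hf.mono (uIcc_subset_Icc (left_mem_Icc.2 (hx.1.trans hx.2)) hx)).intervalIntegrable)
    (AEStronglyMeasurable.stronglyMeasurableAtFilter_of_mem
      (hf.aestronglyMeasurable measurableSet_Icc) self_mem_nhdsWithin)
    (hf x hx)

section SIRVariational

variable {γ σ t₀ t₁ : ℝ} {X Y u v : ℝ → ℝ}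

theorem sir_variational_first_integral
    (hX : ∀ s ∈ Icc t₀ t₁, HasDerivWithinAt X (-γ * σ * X s * Y s) (Icc t₀ t₁) s)
    (hXpos : ∀ s ∈ Icc t₀ t₁, 0 < X s)
    (hu : ∀ s ∈ Icc t₀ t₁,
      HasDerivWithinAt u (-γ * σ * (Y s * u s + X s * v s)) (Icc t₀ t₁) s)
    (hv : ∀ s ∈ Icc t₀ t₁,
      HasDerivWithinAt v (γ * σ * Y s * u s + γ * (σ * X s - 1) * v s) (Icc t₀ t₁) s)
    (hu0 : u t₀ = 1) (hv0 : v t₀ = -1) :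
    ∀ s ∈ Icc t₀ t₁, u s = σ * X s * (u s + v s) + X s / X t₀ := by
  have hconst : ∀ s ∈ Icc t₀ t₁, u s / X s = σ * (u s + v s) + 1 / X t₀ := by
    refine eq_of_hasDerivWithinAt_Icc_eq (f' := fun s => -γ * σ * v s) (fun s hs => ?_)
      (fun s hs => ?_) (by simp [hu0, hv0])
    · refine ((hu s hs).div (hX s hs) (hXpos s hs).ne').congr_deriv ?_
      field_simp [(hXpos s hs).ne']
      ring
    · exact ((((hu s hs).add (hv s hs)).const_mul σ).add_const _).congr_deriv (by ring)
  intro s hs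
  have h := hconst s hs
  rw [div_eq_iff (hXpos s hs).ne'] at h
  linear_combination h

theorem sir_variational_add_eq_integral
    (hX : ∀ s ∈ Icc t₀ t₁, HasDerivWithinAt X (-γ * σ * X s * Y s) (Icc t₀ t₁) s)
    (hY : ∀ s ∈ Icc t₀ t₁,
      HasDerivWithinAt Y (γ * σ * X s * Y s - γ * Y s) (Icc t₀ t₁) s)
    (hXpos : ∀ s ∈ Icc t₀ t₁, 0 < X s)
    (hYpos : ∀ s ∈ Icc t₀ t₁, 0 < Y s)
    (hu : ∀ s ∈ Icc t₀ t₁,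
      HasDerivWithinAt u (-γ * σ * (Y s * u s + X s * v s)) (Icc t₀ t₁) s)
    (hv : ∀ s ∈ Icc t₀ t₁,
      HasDerivWithinAt v (γ * σ * Y s * u s + γ * (σ * X s - 1) * v s) (Icc t₀ t₁) s)
    (hu0 : u t₀ = 1) (hv0 : v t₀ = -1) :
    ∀ s ∈ Icc t₀ t₁, u s + v s = γ * (Y s / X t₀) * ∫ r in t₀..s, X r / Y r := by
  have hXY : ContinuousOn (fun r => X r / Y r) (Icc t₀ t₁) := fun s hs =>
    (hX s hs).continuousWithinAt.div (hY s hs).continuousWithinAt (hYpos s hs).ne'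
  have hquot : ∀ s ∈ Icc t₀ t₁, (u s + v s) / Y s = γ / X t₀ * ∫ r in t₀..s, X r / Y r := by
    refine eq_of_hasDerivWithinAt_Icc_eq (f' := fun s => γ / X t₀ * (X s / Y s))
      (fun s hs => ?_) (fun s hs => (hXY.hasDerivWithinAt_integral_Icc hs).const_mul _)
      (by simp [hu0, hv0])
    refine (((hu s hs).add (hv s hs)).div (hY s hs) (hYpos s hs).ne').congr_deriv ?_
    rw [Pi.add_apply]
    field_simp [(hYpos s hs).ne']
    linear_combination γ * sir_variational_first_integral hX hXpos hu hv hu0 hv0 s hs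
  intro s hs
  have h := hquot s hs
  rw [div_eq_iff (hYpos s hs).ne'] at h
  rw [h]
  ring

end SIRVariational

theorem variational_solution_formulas_general
    (γ σ t₀ t₁ : ℝ)
    (X Y u v : ℝ → ℝ)
    (hX : ∀ s ∈ Icc t₀ t₁, HasDerivWithinAt X (-γ * σ * X s * Y s) (Icc t₀ t₁) s)
    (hY : ∀ s ∈ Icc t₀ t₁,
      HasDerivWithinAt Y (γ * σ * X s * Y s - γ * Y s) (Icc t₀ t₁) s)
    (hXpos : ∀ s ∈ Icc t₀ t₁, 0 < X s)
    (hYpos : ∀ s ∈ Icc t₀ t₁, 0 < Y s)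
    (hu : ∀ s ∈ Icc t₀ t₁,
      HasDerivWithinAt u (-γ * σ * (Y s * u s + X s * v s)) (Icc t₀ t₁) s)
    (hv : ∀ s ∈ Icc t₀ t₁,
      HasDerivWithinAt v (γ * σ * Y s * u s + γ * (σ * X s - 1) * v s) (Icc t₀ t₁) s)
    (hu0 : u t₀ = 1) (hv0 : v t₀ = -1) :
    ∀ s ∈ Icc t₀ t₁,
      u s = X s / X t₀ + γ * σ * (X s * Y s / X t₀) * ∫ r in t₀..s, X r / Y r ∧
      v s = -(X s / X t₀)
        + γ * ((1 - σ * X s) * Y s / X t₀) * ∫ r in t₀..s, X r / Y r ∧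
      u s + v s = γ * (Y s / X t₀) * ∫ r in t₀..s, X r / Y r := by
  intro s hs
  have hfirst := sir_variational_first_integral hX hXpos hu hv hu0 hv0 s hs
  have hsum := sir_variational_add_eq_integral hX hY hXpos hYpos hu hv hu0 hv0 s hs
  refine ⟨?_, ?_, hsum⟩
  · rw [hfirst, hsum]
    ring
  · linear_combination hsum - hfirst - σ * X s * hsum

/-- Explicit formulas for the solutions `(u, v)` of the variational (linearized)
equations of the SIR system with constant reproduction number `σ`, with initial data
`u(t₀) = 1`, `v(t₀) = -1`. -/
theorem variational_solution_formulas
    (γ σ t₀ t₁ : ℝ) (hγ : 0 < γ) (ht : t₀ ≤ t₁)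
    (X Y u v : ℝ → ℝ)
    (hX : ∀ s ∈ Icc t₀ t₁, HasDerivWithinAt X (-γ * σ * X s * Y s) (Icc t₀ t₁) s)
    (hY : ∀ s ∈ Icc t₀ t₁,
      HasDerivWithinAt Y (γ * σ * X s * Y s - γ * Y s) (Icc t₀ t₁) s)
    (hXpos : ∀ s ∈ Icc t₀ t₁, 0 < X s)
    (hYpos : ∀ s ∈ Icc t₀ t₁, 0 < Y s)
    (hu : ∀ s ∈ Icc t₀ t₁,
      HasDerivWithinAt u (-γ * σ * (Y s * u s + X s * v s)) (Icc t₀ t₁) s)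
    (hv : ∀ s ∈ Icc t₀ t₁,
      HasDerivWithinAt v (γ * σ * Y s * u s + γ * (σ * X s - 1) * v s) (Icc t₀ t₁) s)
    (hu0 : u t₀ = 1) (hv0 : v t₀ = -1) :
    ∀ s ∈ Icc t₀ t₁,
      u s = X s / X t₀ + γ * σ * (X s * Y s / X t₀) * ∫ r in t₀..s, X r / Y r ∧
      v s = -(X s / X t₀)
        + γ * ((1 - σ * X s) * Y s / X t₀) * ∫ r in t₀..s, X r / Y r ∧
      u s + v s = γ * (Y s / X t₀) * ∫ r in t₀..s, X r / Y r :=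
  variational_solution_formulas_general γ σ t₀ t₁ X Y u v hX hY hXpos hYpos hu hv hu0 hv0
end

section
/- Let γ > 0 and σ ∈ ℝ, and let (X, Y) solve the SIR system X'(s) = -γ σ X(s) Y(s), Y'(s) = γ σ X(s) Y(s) - γ Y(s) on [t₀, t₁] with X(s) > 0 and Y(s) > 0 for all s. Let (u, v) solve the linearized system u'(s) = -γ σ (Y(s) u(s) + X(s) v(s)), v'(s) = γ σ Y(s) u(s) + γ (σ X(s) - 1) v(s) with u(t₀) = 1 and v(t₀) = -1. Then for all s ∈ [t₀, t₁], u(s) - σ X(s) (u(s) + v(s)) = X(s)/X(t₀). -/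
open Set

/-- The solutions `(u, v)` of the variational (linearized) equations of the SIR system
with constant reproduction number `σ` and initial data `u(t₀) = 1`, `v(t₀) = -1` satisfy
`u(s) - σ X(s) (u(s) + v(s)) = X(s) / X(t₀)`. -/
theorem variational_identity
    (γ σ t₀ t₁ : ℝ) (hγ : 0 < γ) (ht : t₀ ≤ t₁)
    (X Y u v : ℝ → ℝ)
    (hX : ∀ s ∈ Icc t₀ t₁, HasDerivWithinAt X (-γ * σ * X s * Y s) (Icc t₀ t₁) s)
    (hY : ∀ s ∈ Icc t₀ t₁,
      HasDerivWithinAt Y (γ * σ * X s * Y s - γ * Y s) (Icc t₀ t₁) s)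
    (hXpos : ∀ s ∈ Icc t₀ t₁, 0 < X s)
    (hYpos : ∀ s ∈ Icc t₀ t₁, 0 < Y s)
    (hu : ∀ s ∈ Icc t₀ t₁,
      HasDerivWithinAt u (-γ * σ * (Y s * u s + X s * v s)) (Icc t₀ t₁) s)
    (hv : ∀ s ∈ Icc t₀ t₁,
      HasDerivWithinAt v (γ * σ * Y s * u s + γ * (σ * X s - 1) * v s) (Icc t₀ t₁) s)
    (hu0 : u t₀ = 1) (hv0 : v t₀ = -1) :
    ∀ s ∈ Icc t₀ t₁, u s - σ * X s * (u s + v s) = X s / X t₀ := by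
  set F : ℝ → ℝ := fun s => u s - σ * X s * (u s + v s) with hF
  have hFderiv : ∀ s ∈ Icc t₀ t₁,
      HasDerivWithinAt F (-γ * σ * Y s * F s) (Icc t₀ t₁) s := by
    intro s hs
    have h := ((hu s hs).sub
      ((hasDerivWithinAt_const s _ σ |>.mul (hX s hs)).mul
        ((hu s hs).add (hv s hs))))
    refine h.congr_deriv ?_
    simp only [hF, Pi.add_apply, Pi.mul_apply]
    ring
  set g : ℝ → ℝ := fun s => F s / X s with hg
  have hgderiv : ∀ s ∈ Icc t₀ t₁, HasDerivWithinAt g 0 (Icc t₀ t₁) s := by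
    intro s hs
    have h := (hFderiv s hs).div (hX s hs) (hXpos s hs).ne'
    refine h.congr_deriv ?_
    field_simp
    ring
  have hgcont : ContinuousOn g (Icc t₀ t₁) := fun s hs =>
    (hgderiv s hs).continuousWithinAt
  have hconst : ∀ s ∈ Icc t₀ t₁, g s = g t₀ := by
    apply constant_of_has_deriv_right_zero hgcont
    intro x hx
    have hmem : Icc t₀ t₁ ∈ nhdsWithin x (Ici x) := by
      refine Filter.mem_of_superset (Icc_mem_nhdsGE_of_mem ⟨le_refl x, hx.2⟩) ?_
      exact Icc_subset_Icc hx.1 le_rfl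
    exact (hgderiv x ⟨hx.1, hx.2.le⟩).mono_of_mem_nhdsWithin hmem
  intro s hs
  have h0 : g t₀ = 1 / X t₀ := by
    have hX0 : (0:ℝ) < X t₀ := hXpos t₀ ⟨le_rfl, ht⟩
    simp only [hg, hF, hu0, hv0]
    ring_nf
  have := hconst s hs
  rw [h0] at this
  have hXs : X s ≠ 0 := (hXpos s hs).ne'
  have hX0 : X t₀ ≠ 0 := (hXpos t₀ ⟨le_rfl, ht⟩).ne'
  simp only [hg, hF] at this
  field_simp [hg, hF] at this ⊢
  linarith [this]
end

section
/- Let γ > 0 and 0 ≤ σ_s < σ_f, and let (X, Y) solve the SIR system X'(s) = -γ σ_s X(s) Y(s), Y'(s) = γ σ_s X(s) Y(s) - γ Y(s) on [a, b] with X(s) > 0 and Y(s) > 0 for all s ∈ [a, b]. If σ_f X(b) < 1, then g(s) := σ_f σ_s X(s) Y(s) + (σ_f X(s) - 1)(σ_s X(s) - 1) > 0 for all s ∈ [a, b]. -/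
open Set

lemma aux_antitoneOn_of_deriv {a b : ℝ} {f f' : ℝ → ℝ}
    (hf : ∀ s ∈ Icc a b, HasDerivWithinAt f (f' s) (Icc a b) s)
    (h0 : ∀ s ∈ Icc a b, f' s ≤ 0) : AntitoneOn f (Icc a b) :=
  antitoneOn_of_hasDerivWithinAt_nonpos (convex_Icc a b)
    (fun s hs => (hf s hs).continuousWithinAt)
    (fun x hx => (hf x (interior_subset hx)).mono interior_subset)
    (fun x hx => h0 x (interior_subset hx))

lemma aux_monotoneOn_of_deriv {a b : ℝ} {f f' : ℝ → ℝ}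
    (hf : ∀ s ∈ Icc a b, HasDerivWithinAt f (f' s) (Icc a b) s)
    (h0 : ∀ s ∈ Icc a b, 0 ≤ f' s) : MonotoneOn f (Icc a b) :=
  monotoneOn_of_hasDerivWithinAt_nonneg (convex_Icc a b)
    (fun s hs => (hf s hs).continuousWithinAt)
    (fun x hx => (hf x (interior_subset hx)).mono interior_subset)
    (fun x hx => h0 x (interior_subset hx))

/-- Positivity of the auxiliary function
`g(s) = σ_f σ_s X(s) Y(s) + (σ_f X(s) - 1)(σ_s X(s) - 1)` along a strict quarantine
phase ending with `σ_f X(b) < 1`. -/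
theorem auxiliary_g_positive
    (γ σs σf a b : ℝ) (hγ : 0 < γ) (hσs : 0 ≤ σs) (hσsf : σs < σf) (hab : a ≤ b)
    (X Y : ℝ → ℝ)
    (hX : ∀ s ∈ Icc a b, HasDerivWithinAt X (-γ * σs * X s * Y s) (Icc a b) s)
    (hY : ∀ s ∈ Icc a b,
      HasDerivWithinAt Y (γ * σs * X s * Y s - γ * Y s) (Icc a b) s)
    (hXpos : ∀ s ∈ Icc a b, 0 < X s)
    (hYpos : ∀ s ∈ Icc a b, 0 < Y s)
    (hXb : σf * X b < 1) :
    ∀ s ∈ Icc a b,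
      0 < σf * σs * X s * Y s + (σf * X s - 1) * (σs * X s - 1) := by
  have hbmem : b ∈ Icc a b := ⟨hab, le_refl b⟩
  -- X is antitone on [a, b]
  have hXanti : AntitoneOn X (Icc a b) := by
    apply aux_antitoneOn_of_deriv hX
    intro s hs
    have := mul_pos (hXpos s hs) (hYpos s hs)
    nlinarith [mul_nonneg (mul_nonneg hγ.le hσs) this.le]
  rcases eq_or_lt_of_le hσs with hσs0 | hσspos
  · -- σs = 0 : X is constant
    subst hσs0
    have hXmono : MonotoneOn X (Icc a b) := by
      apply aux_monotoneOn_of_deriv hX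
      intro s hs; simp
    intro s hs
    have h1 : X s ≤ X b := hXmono hs hbmem hs.2
    have h2 : X b ≤ X s := hXanti hs hbmem hs.2
    have : X s = X b := le_antisymm h1 h2
    rw [this]
    nlinarith
  · -- σs > 0
    have hσf : 0 < σf := lt_trans hσspos hσsf
    -- the auxiliary function k with g = X * k
    set k : ℝ → ℝ := fun s => (X s)⁻¹ - (σf + σs) + σf * σs * (X s + Y s) with hkdef
    have hk : ∀ s ∈ Icc a b,
        HasDerivWithinAt k (γ * σs * Y s * ((X s)⁻¹ - σf)) (Icc a b) s := by
      intro s hs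
      have hXs := hXpos s hs
      have hder := (((hX s hs).inv hXs.ne').sub_const (σf + σs)).add
        (((hX s hs).add (hY s hs)).const_mul (σf * σs))
      have heq : -(-γ * σs * X s * Y s) / X s ^ 2 +
          σf * σs * (-γ * σs * X s * Y s + (γ * σs * X s * Y s - γ * Y s)) =
          γ * σs * Y s * ((X s)⁻¹ - σf) := by
        field_simp
        ring
      rw [← heq]
      exact hder
    intro s₀ hs₀
    have hXs₀ := hXpos s₀ hs₀
    have hYs₀ := hYpos s₀ hs₀
    rcases le_or_gt (σf * X s₀) 1 with hle | hgt
    · -- easy case: σf X(s₀) ≤ 1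
      have hss : σs * X s₀ < σf * X s₀ := by nlinarith
      have hss1 : σs * X s₀ ≤ 1 := le_of_lt (lt_of_lt_of_le hss hle)
      nlinarith [mul_pos (mul_pos (mul_pos hσf hσspos) hXs₀) hYs₀,
        mul_nonneg (sub_nonneg.2 hle) (sub_nonneg.2 hss1)]
    · -- hard case : σf X(s₀) > 1, find c with σf X(c) = 1
      have hcont : ContinuousOn X (Icc s₀ b) :=
        fun s hs => ((hX s ⟨le_trans hs₀.1 hs.1, hs.2⟩).continuousWithinAt).mono
          (Icc_subset_Icc hs₀.1 le_rfl)
      have hs₀b : s₀ ≤ b := hs₀.2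
      have hsub : Icc s₀ b ⊆ Icc a b := Icc_subset_Icc hs₀.1 le_rfl
      have hIV : (1 : ℝ) ∈ (fun s => σf * X s) '' Icc s₀ b := by
        apply intermediate_value_Icc' hs₀b
          (continuousOn_const.mul hcont)
        exact ⟨le_of_lt hXb, le_of_lt hgt⟩
      obtain ⟨c, hc, hXc⟩ := hIV
      have hcab : c ∈ Icc a b := hsub hc
      have hXcpos := hXpos c hcab
      have hYcpos := hYpos c hcab
      -- on [s₀, c], σf X ≥ 1 hence k' ≤ 0, so k antitone there
      have hsub2 : Icc s₀ c ⊆ Icc a b := Icc_subset_Icc hs₀.1 hcab.2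
      have hkanti : AntitoneOn k (Icc s₀ c) := by
        apply aux_antitoneOn_of_deriv
          (f' := fun s => γ * σs * Y s * ((X s)⁻¹ - σf))
        · intro s hs
          exact (hk s (hsub2 hs)).mono hsub2
        · intro s hs
          have hsab := hsub2 hs
          have hXs := hXpos s hsab
          have hXge : X c ≤ X s := hXanti hsab hcab hs.2
          have h1 : (1 : ℝ) ≤ σf * X s := by
            calc (1 : ℝ) = σf * X c := hXc.symm
            _ ≤ σf * X s := by nlinarith
          have hinv : (X s)⁻¹ ≤ σf := by
            nlinarith [inv_mul_cancel₀ hXs.ne', inv_pos.2 hXs]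
          have hY' := hYpos s hsab
          nlinarith [mul_nonneg (mul_nonneg (mul_nonneg hγ.le hσspos.le) hY'.le)
            (sub_nonneg.2 hinv)]
      have hkc : k c = σf * σs * Y c := by
        have hXc' : σf * X c = 1 := hXc
        have hXcval : X c = σf⁻¹ := by
          field_simp
          linarith
        simp only [hkdef, hXcval]
        field_simp
        ring
      have hkc_pos : 0 < k c := by
        rw [hkc]; positivity
      have hks₀ : k c ≤ k s₀ :=
        hkanti ⟨le_rfl, hc.1⟩ ⟨hc.1, le_rfl⟩ hc.1
      have hkpos : 0 < k s₀ := lt_of_lt_of_le hkc_pos hks₀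
      have hfactor : σf * σs * X s₀ * Y s₀ + (σf * X s₀ - 1) * (σs * X s₀ - 1)
          = X s₀ * k s₀ := by
        simp only [hkdef]
        field_simp
        ring
      rw [hfactor]
      exact mul_pos hXs₀ hkpos
end

section
/- Let γ > 0 and σ_s, σ_f ∈ ℝ, and let (X, Y) solve the SIR system X'(s) = -γ σ_s X(s) Y(s), Y'(s) = γ σ_s X(s) Y(s) - γ Y(s) on [a, b] with X(s) > 0 and Y(s) > 0 for all s ∈ [a, b]. Set g(s) = σ_f σ_s X(s) Y(s) + (σ_f X(s) - 1)(σ_s X(s) - 1) and f(s) = (σ_f X(s) - 1)/Y(s). Then for all s ∈ [a, b], f'(s) = -γ g(s)/Y(s) and g'(s) = -γ σ_s² X(s) Y(s) (σ_f X(s) + σ_f Y(s) - 1). Moreover, if 0 ≤ σ_s < σ_f and σ_f X(b) < 1, then f is strictly decreasing on [a, b]. -/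
open Set

/-- Derivative formulas for the auxiliary functions
`g(s) = σ_f σ_s X Y + (σ_f X - 1)(σ_s X - 1)` and `f(s) = (σ_f X - 1)/Y` along the
SIR flow with reproduction number `σ_s`: `f' = -γ g / Y` and
`g' = -γ σ_s² X Y (σ_f X + σ_f Y - 1)`.  Moreover if `0 ≤ σ_s < σ_f` and
`σ_f X(b) < 1`, then `f` is strictly decreasing on `[a, b]`. -/
theorem auxiliary_f_g_derivatives
    (γ σs σf a b : ℝ) (hγ : 0 < γ) (hab : a ≤ b)
    (X Y : ℝ → ℝ)
    (hX : ∀ s ∈ Icc a b, HasDerivWithinAt X (-γ * σs * X s * Y s) (Icc a b) s)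
    (hY : ∀ s ∈ Icc a b,
      HasDerivWithinAt Y (γ * σs * X s * Y s - γ * Y s) (Icc a b) s)
    (hXpos : ∀ s ∈ Icc a b, 0 < X s)
    (hYpos : ∀ s ∈ Icc a b, 0 < Y s)
    (g f : ℝ → ℝ)
    (hg : ∀ s, g s = σf * σs * X s * Y s + (σf * X s - 1) * (σs * X s - 1))
    (hf : ∀ s, f s = (σf * X s - 1) / Y s) :
    (∀ s ∈ Icc a b, HasDerivWithinAt f (-γ * g s / Y s) (Icc a b) s) ∧
    (∀ s ∈ Icc a b,
      HasDerivWithinAt g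
        (-γ * σs ^ 2 * X s * Y s * (σf * X s + σf * Y s - 1)) (Icc a b) s) ∧
    (0 ≤ σs → σs < σf → σf * X b < 1 → StrictAntiOn f (Icc a b)) := by
  have hfe : f = fun t => (σf * X t - 1) / Y t := funext hf
  have hge : g = fun t =>
      σf * σs * X t * Y t + (σf * X t - 1) * (σs * X t - 1) := funext hg
  have hYne : ∀ s ∈ Icc a b, Y s ≠ 0 := fun s hs => (hYpos s hs).ne'
  -- f derivative
  have hfD : ∀ s ∈ Icc a b, HasDerivWithinAt f (-γ * g s / Y s) (Icc a b) s := by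
    intro s hs
    have h1 : HasDerivWithinAt (fun t => (σf * X t - 1) / Y t)
        ((σf * (-γ * σs * X s * Y s) * Y s -
          (σf * X s - 1) * (γ * σs * X s * Y s - γ * Y s)) / (Y s) ^ 2)
        (Icc a b) s :=
      (((hX s hs).const_mul σf).sub_const 1).div (hY s hs) (hYne s hs)
    rw [hfe]
    convert h1 using 1
    rw [hg s]
    have hy := hYne s hs
    field_simp
    ring
  -- g derivative
  have hgD : ∀ s ∈ Icc a b, HasDerivWithinAt g
      (-γ * σs ^ 2 * X s * Y s * (σf * X s + σf * Y s - 1)) (Icc a b) s := by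
    intro s hs
    have h1 : HasDerivWithinAt
        (fun t => σf * σs * X t * Y t + (σf * X t - 1) * (σs * X t - 1))
        ((σf * σs * (-γ * σs * X s * Y s) * Y s +
            σf * σs * X s * (γ * σs * X s * Y s - γ * Y s)) +
          (σf * (-γ * σs * X s * Y s) * (σs * X s - 1) +
            (σf * X s - 1) * (σs * (-γ * σs * X s * Y s))))
        (Icc a b) s := by
      exact ((((hX s hs).const_mul (σf * σs)).mul (hY s hs)).add
        ((((hX s hs).const_mul σf).sub_const 1).mul
          (((hX s hs).const_mul σs).sub_const 1)))
    rw [hge]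
    convert h1 using 1
    ring
  refine ⟨hfD, hgD, ?_⟩
  intro hσs hσsf hXb
  have hσf : 0 < σf := lt_of_le_of_lt hσs hσsf
  have hXc : ContinuousOn X (Icc a b) := fun s hs => (hX s hs).continuousWithinAt
  have hfc : ContinuousOn f (Icc a b) := fun s hs => (hfD s hs).continuousWithinAt
  have hgc : ContinuousOn g (Icc a b) := fun s hs => (hgD s hs).continuousWithinAt
  have hint : interior (Icc a b) = Ioo a b := interior_Icc
  -- X is antitone on [a, b]
  have hXanti : AntitoneOn X (Icc a b) := by
    apply antitoneOn_of_hasDerivWithinAt_nonpos (f' := fun s => -γ * σs * X s * Y s)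
      (convex_Icc a b) hXc
    · intro x hx
      rw [hint] at hx ⊢
      exact ((hX x (Ioo_subset_Icc_self hx)).mono Ioo_subset_Icc_self)
    · intro x hx
      rw [hint] at hx
      have hx' := Ioo_subset_Icc_self hx
      have := mul_pos (hXpos x hx') (hYpos x hx')
      nlinarith [mul_nonneg (mul_nonneg hγ.le hσs) this.le]
  -- g is positive on [a, b]
  have hgpos : ∀ s ∈ Icc a b, 0 < g s := by
    intro s hs
    rcases lt_or_ge (σf * X s) 1 with h1 | h1
    · -- easy case : σf X s < 1
      rw [hg]
      have hXs := hXpos s hs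
      have hYs := hYpos s hs
      have h2 : σs * X s < 1 := by nlinarith
      nlinarith [mul_pos (sub_pos.mpr h1) (sub_pos.mpr h2),
        mul_nonneg (mul_nonneg (mul_nonneg hσf.le hσs) hXs.le) hYs.le]
    · -- hard case : σf X s ≥ 1
      have hσs0 : 0 < σs := by
        rcases eq_or_lt_of_le hσs with h | h
        · exfalso
          -- with σs = 0, X is also monotone, hence constant, contradiction
          have hXmono : MonotoneOn X (Icc a b) := by
            apply monotoneOn_of_hasDerivWithinAt_nonneg
              (f' := fun s => -γ * σs * X s * Y s) (convex_Icc a b) hXc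
            · intro x hx
              rw [hint] at hx ⊢
              exact ((hX x (Ioo_subset_Icc_self hx)).mono Ioo_subset_Icc_self)
            · intro x hx
              simp [← h]
          have h3 : X s ≤ X b := hXmono hs (right_mem_Icc.mpr hab) hs.2
          nlinarith
        · exact h
      have hsb : Icc s b ⊆ Icc a b := Icc_subset_Icc hs.1 le_rfl
      -- find crossing point c with X c = 1/σf
      obtain ⟨c, hc_mem, hXc1⟩ : ∃ c ∈ Icc s b, X c = 1 / σf := by
        have h4 : (1 : ℝ) / σf ∈ Icc (X b) (X s) := by
          constructor
          · rw [le_div_iff₀ hσf]; nlinarith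
          · rw [div_le_iff₀ hσf]; nlinarith
        have := intermediate_value_Icc' hs.2 (hXc.mono hsb) h4
        obtain ⟨c, hc, hc'⟩ := this
        exact ⟨c, hc, hc'⟩
      have hc_ab : c ∈ Icc a b := hsb hc_mem
      have hσfXc : σf * X c = 1 := by
        rw [hXc1]; field_simp
      have hgc_pos : 0 < g c := by
        have hYc := hYpos c hc_ab
        have hXcp := hXpos c hc_ab
        have hgceq : g c = σs * Y c := by
          rw [hg]; linear_combination (σs * Y c + σs * X c - 1) * hσfXc
        rw [hgceq]
        positivity
      rcases eq_or_lt_of_le hc_mem.1 with hsc | hsc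
      · rwa [hsc]
      · -- g is strictly antitone on [s, c]
        have hIcc : Icc s c ⊆ Icc a b := Icc_subset_Icc hs.1 hc_ab.2
        have hganti : StrictAntiOn g (Icc s c) := by
          apply strictAntiOn_of_hasDerivWithinAt_neg
            (f' := fun x => -γ * σs ^ 2 * X x * Y x * (σf * X x + σf * Y x - 1))
            (convex_Icc s c) (hgc.mono hIcc)
          · intro x hx
            rw [interior_Icc] at hx ⊢
            exact (hgD x (hIcc (Ioo_subset_Icc_self hx))).mono
              (subset_trans Ioo_subset_Icc_self hIcc)
          · intro x hx
            rw [interior_Icc] at hx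
            have hx' : x ∈ Icc a b := hIcc (Ioo_subset_Icc_self hx)
            have hXx := hXpos x hx'
            have hYx := hYpos x hx'
            -- X x ≥ X c = 1/σf since x ≤ c
            have h5 : X c ≤ X x := hXanti hx' hc_ab hx.2.le
            have h6 : 1 ≤ σf * X x := by
              rw [hXc1, div_le_iff₀ hσf] at h5
              linarith
            have h7 : 0 < σf * Y x := mul_pos hσf hYx
            have h8 : 0 < σf * X x + σf * Y x - 1 := by linarith
            have : 0 < γ * σs ^ 2 * X x * Y x * (σf * X x + σf * Y x - 1) := by
              positivity
            linarith
        have := hganti (left_mem_Icc.mpr hsc.le) (right_mem_Icc.mpr hsc.le) hsc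
        linarith
  -- conclude : f strictly antitone
  apply strictAntiOn_of_hasDerivWithinAt_neg (f' := fun s => -γ * g s / Y s)
    (convex_Icc a b) hfc
  · intro x hx
    rw [hint] at hx ⊢
    exact (hfD x (Ioo_subset_Icc_self hx)).mono Ioo_subset_Icc_self
  · intro x hx
    rw [hint] at hx
    have hx' : x ∈ Icc a b := Ioo_subset_Icc_self hx
    have h1 : -γ * g x < 0 := by
      have := hgpos x hx'
      nlinarith
    exact div_neg_of_neg_of_pos h1 (hYpos x hx')
end
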